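/- arXiv:1107.5353 — 3 statements merged into one kernel-verified Lean document; each statement's English description precedes it below -/
import Mathlib

section
/- For all vector fields X, Y, Z on TM, the covariant derivative of the tensor ℛ with respect to ∇* satisfies (∇*_X ℛ)(Y,Z) = (∇_{X^h}R)(Y,Z)ξ + R(Y,Z)X^v; in particular it is vertical-valued and depends on Y, Z only through their horizontal parts. -/
/-!
An abstract model of the calculus of vector fields on the total space `TM` of the
tangent bundle of a Riemannian manifold `(M,g)` with Levi-Civita connection `∇`
(Mathlib has no Riemannian curvature theory, so the setting of the paper is
axiomatised).  Here

* `F` plays the role of the commutative ℝ-algebra of smooth functions on `TM`;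
* `VF` plays the role of the `F`-module of vector fields on `TM`, i.e. sections of
  `TTM = H ⊕ V`, where both subbundles are identified with the pull-back `π*TM`;
* `lie` is the Lie bracket of vector fields, `der X f` is the derivative `X(f)`;
* `h`, `v` are the horizontal and vertical projections, `X = X^h + X^v`;
* `inn` is the Sasaki metric `⟨·,·⟩ = π*g ⊕ π*g` on `H ⊕ V`;
* `nab` is the metric connection `∇* = π*∇ ⊕ π*∇` on `TTM`;
* `xi` is the canonical vertical vector field `ξ`, `ξ_u = u`, with `∇*_X ξ = X^v`;
* `Rop` is the pull-back `π*R` of the curvature tensor `R` of `M`, acting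
  diagonally on `H ⊕ V`; it is the curvature of `∇*`, and the torsion of `∇*` is
  the tensor `ℛ(X,Y) = π*R(X,Y)ξ`;
* `theta` is the endomorphism `θ` identifying `H` with `V` (and vanishing on `V`);
* `nng f` means that the function `f : F` is pointwise nonnegative.
-/
structure SasakiModel where
  F : Type
  VF : Type
  [instCommRing : CommRing F]
  [instAlgebra : Algebra ℝ F]
  [instAddCommGroup : AddCommGroup VF]
  [instModule : Module F VF]
  lie : VF → VF → VF
  der : VF → F → F
  h : VF → VF
  v : VF → VF
  inn : VF → VF → F
  nab : VF → VF → VF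
  xi : VF
  Rop : VF → VF → VF → VF
  theta : VF → VF
  nng : F → Prop
  der_add : ∀ X Y f, der (X + Y) f = der X f + der Y f
  der_smul : ∀ (g : F) (X : VF) (f : F), der (g • X) f = g * der X f
  der_leibniz : ∀ X f g, der X (f * g) = der X f * g + f * der X g
  der_const : ∀ (X : VF) (c : ℝ), der X (algebraMap ℝ F c) = 0
  der_lie : ∀ X Y f, der (lie X Y) f = der X (der Y f) - der Y (der X f)
  lie_antisymm : ∀ X Y, lie X Y = -lie Y X
  h_add : ∀ X Y, h (X + Y) = h X + h Y
  h_smul : ∀ (f : F) (X : VF), h (f • X) = f • h X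
  v_add : ∀ X Y, v (X + Y) = v X + v Y
  v_smul : ∀ (f : F) (X : VF), v (f • X) = f • v X
  h_add_v : ∀ X, h X + v X = X
  h_h : ∀ X, h (h X) = h X
  v_v : ∀ X, v (v X) = v X
  h_of_v : ∀ X, h (v X) = 0
  v_of_h : ∀ X, v (h X) = 0
  inn_symm : ∀ X Y, inn X Y = inn Y X
  inn_add_left : ∀ X Y Z, inn (X + Y) Z = inn X Z + inn Y Z
  inn_smul_left : ∀ (f : F) (X Y : VF), inn (f • X) Y = f * inn X Y
  inn_hv : ∀ X Y, inn (h X) (v Y) = 0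
  inn_nonneg : ∀ X, nng (inn X X)
  inn_nondeg : ∀ X, (∀ Y, inn X Y = 0) → X = 0
  nng_add : ∀ f g, nng f → nng g → nng (f + g)
  nng_mul : ∀ f g, nng f → nng g → nng (f * g)
  nng_sq : ∀ f, nng (f * f)
  nab_add_left : ∀ X Y Z, nab (X + Y) Z = nab X Z + nab Y Z
  nab_smul_left : ∀ (f : F) (X Y : VF), nab (f • X) Y = f • nab X Y
  nab_add_right : ∀ X Y Z, nab X (Y + Z) = nab X Y + nab X Z
  nab_leibniz : ∀ (X : VF) (f : F) (Y : VF), nab X (f • Y) = der X f • Y + f • nab X Y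
  nab_metric : ∀ X Y Z, der X (inn Y Z) = inn (nab X Y) Z + inn Y (nab X Z)
  nab_h : ∀ X Y, h (nab X (h Y)) = nab X (h Y)
  nab_v : ∀ X Y, v (nab X (v Y)) = nab X (v Y)
  v_xi : v xi = xi
  nab_xi : ∀ X, nab X xi = v X
  Rop_add₁ : ∀ X X' Y Z, Rop (X + X') Y Z = Rop X Y Z + Rop X' Y Z
  Rop_smul₁ : ∀ (f : F) (X Y Z : VF), Rop (f • X) Y Z = f • Rop X Y Z
  Rop_add₃ : ∀ X Y Z Z', Rop X Y (Z + Z') = Rop X Y Z + Rop X Y Z'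
  Rop_smul₃ : ∀ (f : F) (X Y Z : VF), Rop X Y (f • Z) = f • Rop X Y Z
  Rop_horiz : ∀ X Y Z, Rop X Y Z = Rop (h X) (h Y) Z
  Rop_antisymm : ∀ X Y Z, Rop X Y Z = -Rop Y X Z
  Rop_skew : ∀ X Y Z W, inn (Rop X Y Z) W = -inn (Rop X Y W) Z
  Rop_v : ∀ X Y Z, v (Rop X Y (v Z)) = Rop X Y (v Z)
  Rop_h : ∀ X Y Z, h (Rop X Y (h Z)) = Rop X Y (h Z)
  Rop_parallel : ∀ X Y Z W, nab (v X) (Rop Y Z W) =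
    Rop (nab (v X) Y) Z W + Rop Y (nab (v X) Z) W + Rop Y Z (nab (v X) W)
  curv_nab : ∀ X Y Z, nab X (nab Y Z) - nab Y (nab X Z) - nab (lie X Y) Z = Rop X Y Z
  torsion_nab : ∀ X Y, nab X Y - nab Y X - lie X Y = Rop X Y xi
  theta_add : ∀ X Y, theta (X + Y) = theta X + theta Y
  theta_smul : ∀ (f : F) (X : VF), theta (f • X) = f • theta X
  theta_vert : ∀ X, v (theta X) = theta X
  theta_horiz : ∀ X, theta X = theta (h X)
  theta_inn : ∀ X Y, inn (theta X) (theta Y) = inn (h X) (h Y)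

attribute [instance] SasakiModel.instCommRing SasakiModel.instAlgebra
  SasakiModel.instAddCommGroup SasakiModel.instModule

namespace SasakiModel

variable (M : SasakiModel)

/-- Multiplication of a vector field by a real constant. -/
def sm (c : ℝ) (X : M.VF) : M.VF := algebraMap ℝ M.F c • X

/-- Real constants as functions on `TM`. -/
def cst (c : ℝ) : M.F := algebraMap ℝ M.F c

/-- The tensor `ℛ(X,Y) = π*R(X,Y)ξ`. -/
def calR (X Y : M.VF) : M.VF := M.Rop X Y M.xi

/-- The curvature operator of a connection `D` on `TTM`. -/
def curvOf (D : M.VF → M.VF → M.VF) (X Y Z : M.VF) : M.VF :=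
  D X (D Y Z) - D Y (D X Z) - D (M.lie X Y) Z

/-- The covariant derivative `(∇*_X ℛ)(Y,Z)` of the tensor `ℛ`. -/
def nabR (X Y Z : M.VF) : M.VF :=
  M.nab X (M.calR Y Z) - M.calR (M.nab X Y) Z - M.calR Y (M.nab X Z)

/-- The covariant derivative `(∇*_X (π*R))(Y,Z)W`; for horizontal `X = X^h` this is
the pull-back of `(∇_{X^h} R)(Y,Z)W`. -/
def DRop (X Y Z W : M.VF) : M.VF :=
  M.nab X (M.Rop Y Z W) - M.Rop (M.nab X Y) Z W - M.Rop Y (M.nab X Z) W -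
    M.Rop Y Z (M.nab X W)

/-- The exterior covariant derivative `d^∇C` of a 1-form `C` with values in
`End TTM`, with respect to `∇ = ∇* ⊕ ∇*`:
`d^∇C(X,Y) = ∇_X C_Y - ∇_Y C_X - C_{[X,Y]}` as an endomorphism, applied to `Z`. -/
def dC (C : M.VF → M.VF → M.VF) (X Y Z : M.VF) : M.VF :=
  M.nab X (C Y Z) - C Y (M.nab X Z) - (M.nab Y (C X Z) - C X (M.nab Y Z)) -
    C (M.lie X Y) Z

/-- The weighted Sasaki metric `G = g^{f₁,f₂} = f₁ π*g ⊕ f₂ π*g` on `H ⊕ V`,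
for constant weights `f₁, f₂`. -/
def Gmet (f₁ f₂ : ℝ) (X Y : M.VF) : M.F :=
  M.cst f₁ * M.inn (M.h X) (M.h Y) + M.cst f₂ * M.inn (M.v X) (M.v Y)

end SasakiModel

namespace SasakiModel

variable (M : SasakiModel)

lemma nab_zero_right (X : M.VF) : M.nab X 0 = 0 := by
  have h : M.nab X 0 = M.nab X 0 + M.nab X 0 := by
    simpa using M.nab_add_right X 0 0
  exact (left_eq_add.mp h)

lemma v_zero : M.v 0 = 0 := by
  have h : M.v 0 = M.v 0 + M.v 0 := by simpa using M.v_add 0 0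
  exact (left_eq_add.mp h)

lemma h_zero : M.h 0 = 0 := by
  have h : M.h 0 = M.h 0 + M.h 0 := by simpa using M.h_add 0 0
  exact (left_eq_add.mp h)

lemma v_neg (X : M.VF) : M.v (-X) = -M.v X := by
  have h : M.v X + M.v (-X) = 0 := by rw [← M.v_add]; simp [M.v_zero]
  exact eq_neg_of_add_eq_zero_right h

lemma v_sub (X Y : M.VF) : M.v (X - Y) = M.v X - M.v Y := by
  rw [sub_eq_add_neg, M.v_add, M.v_neg, sub_eq_add_neg]

lemma Rop_zero₁ (Y Z : M.VF) : M.Rop 0 Y Z = 0 := by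
  have h : M.Rop 0 Y Z = M.Rop 0 Y Z + M.Rop 0 Y Z := by
    simpa using M.Rop_add₁ 0 0 Y Z
  exact (left_eq_add.mp h)

lemma Rop_zero₃ (X Y : M.VF) : M.Rop X Y 0 = 0 := by
  have h : M.Rop X Y 0 = M.Rop X Y 0 + M.Rop X Y 0 := by
    simpa using M.Rop_add₃ X Y 0 0
  exact (left_eq_add.mp h)

lemma Rop_add₂ (X Y Y' Z : M.VF) :
    M.Rop X (Y + Y') Z = M.Rop X Y Z + M.Rop X Y' Z := by
  rw [M.Rop_antisymm, M.Rop_add₁, M.Rop_antisymm Y X, M.Rop_antisymm Y' X]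
  abel

lemma Rop_zero₂ (X Z : M.VF) : M.Rop X 0 Z = 0 := by
  rw [M.Rop_antisymm, M.Rop_zero₁, neg_zero]

lemma calR_vert (Y Z : M.VF) : M.v (M.calR Y Z) = M.calR Y Z := by
  unfold calR
  rw [← M.v_xi]
  exact M.Rop_v Y Z M.xi

lemma calR_add₁ (Y Y' Z : M.VF) :
    M.calR (Y + Y') Z = M.calR Y Z + M.calR Y' Z := M.Rop_add₁ Y Y' Z M.xi

lemma calR_add₂ (Y Z Z' : M.VF) :
    M.calR Y (Z + Z') = M.calR Y Z + M.calR Y Z' := M.Rop_add₂ Y Z Z' M.xi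

lemma calR_horiz (Y Z : M.VF) : M.calR Y Z = M.calR (M.h Y) (M.h Z) := by
  unfold calR; rw [M.Rop_horiz]

/-- `nabR` is additive in the first argument. -/
lemma nabR_add₁ (X X' Y Z : M.VF) :
    M.nabR (X + X') Y Z = M.nabR X Y Z + M.nabR X' Y Z := by
  unfold nabR
  rw [M.nab_add_left, M.nab_add_left, M.nab_add_left,
    M.calR_add₁, M.calR_add₂]
  abel

/-- `nabR` is additive in the second argument. -/
lemma nabR_add₂ (X Y Y' Z : M.VF) :
    M.nabR X (Y + Y') Z = M.nabR X Y Z + M.nabR X Y' Z := by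
  unfold nabR
  rw [M.calR_add₁, M.nab_add_right, M.nab_add_right, M.calR_add₁, M.calR_add₁]
  abel

/-- `nabR` is additive in the third argument. -/
lemma nabR_add₃ (X Y Z Z' : M.VF) :
    M.nabR X Y (Z + Z') = M.nabR X Y Z + M.nabR X Y Z' := by
  unfold nabR
  rw [M.calR_add₂, M.nab_add_right, M.nab_add_right, M.calR_add₂, M.calR_add₂]
  abel

/-- `nabR` vanishes when the second argument is vertical. -/
lemma nabR_vert₂ (X Y Z : M.VF) : M.nabR X (M.v Y) Z = 0 := by
  unfold nabR calR
  have h1 : M.Rop (M.v Y) Z M.xi = 0 := by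
    rw [M.Rop_horiz, M.h_of_v, M.Rop_zero₁]
  have h2 : M.Rop (M.nab X (M.v Y)) Z M.xi = 0 := by
    rw [M.Rop_horiz, ← M.nab_v, M.h_of_v, M.Rop_zero₁]
  have h3 : M.Rop (M.v Y) (M.nab X Z) M.xi = 0 := by
    rw [M.Rop_horiz, M.h_of_v, M.Rop_zero₁]
  rw [h1, h2, h3, M.nab_zero_right]
  abel

/-- `nabR` vanishes when the third argument is vertical. -/
lemma nabR_vert₃ (X Y Z : M.VF) : M.nabR X Y (M.v Z) = 0 := by
  unfold nabR calR
  have h1 : M.Rop Y (M.v Z) M.xi = 0 := by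
    rw [M.Rop_horiz, M.h_of_v, M.Rop_zero₂]
  have h2 : M.Rop (M.nab X Y) (M.v Z) M.xi = 0 := by
    rw [M.Rop_horiz, M.h_of_v, M.Rop_zero₂]
  have h3 : M.Rop Y (M.nab X (M.v Z)) M.xi = 0 := by
    rw [M.Rop_horiz (X := Y), ← M.nab_v, M.h_of_v, M.Rop_zero₂]
  rw [h1, h2, h3, M.nab_zero_right]
  abel

/-- `nabR` in a vertical direction. -/
lemma nabR_vdir (X Y Z : M.VF) : M.nabR (M.v X) Y Z = M.Rop Y Z (M.v X) := by
  unfold nabR calR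
  have hp := M.Rop_parallel X Y Z M.xi
  rw [M.nab_xi, M.v_v] at hp
  rw [hp]
  abel

/-- `nabR` in a horizontal direction. -/
lemma nabR_hdir (X Y Z : M.VF) :
    M.nabR (M.h X) Y Z = M.DRop (M.h X) Y Z M.xi := by
  unfold nabR calR DRop
  rw [M.nab_xi, M.v_of_h, M.Rop_zero₃]
  abel

end SasakiModel

open SasakiModel in
/-- For all vector fields `X, Y, Z` on `TM`, the covariant derivative
of the tensor `ℛ` with respect to `∇*` satisfies
`(∇*_X ℛ)(Y,Z) = (∇_{X^h}R)(Y,Z)ξ + R(Y,Z)X^v`;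
in particular it is vertical-valued and depends on `Y, Z` only through their
horizontal parts. -/
theorem covariant_derivative_of_calR (M : SasakiModel) :
    ∀ X Y Z : M.VF,
      M.nabR X Y Z = M.DRop (M.h X) Y Z M.xi + M.Rop Y Z (M.v X) ∧
      M.v (M.nabR X Y Z) = M.nabR X Y Z ∧
      M.nabR X Y Z = M.nabR X (M.h Y) (M.h Z) := by
  intro X Y Z
  have key : M.nabR X Y Z = M.DRop (M.h X) Y Z M.xi + M.Rop Y Z (M.v X) := by
    calc M.nabR X Y Z = M.nabR (M.h X + M.v X) Y Z := by rw [M.h_add_v X]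
      _ = M.nabR (M.h X) Y Z + M.nabR (M.v X) Y Z := M.nabR_add₁ _ _ _ _
      _ = _ := by rw [M.nabR_hdir, M.nabR_vdir]
  refine ⟨key, ?_, ?_⟩
  · show M.v (M.nabR X Y Z) = _
    unfold SasakiModel.nabR
    rw [M.v_sub, M.v_sub]
    have A : M.v (M.nab X (M.calR Y Z)) = M.nab X (M.calR Y Z) := by
      conv_lhs => rw [← M.calR_vert]
      rw [M.nab_v, M.calR_vert]
    rw [A, M.calR_vert, M.calR_vert]
  · conv_lhs => rw [← M.h_add_v Y]
    rw [M.nabR_add₂, M.nabR_vert₂, add_zero]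
    conv_lhs => rw [← M.h_add_v Z]
    rw [M.nabR_add₃, M.nabR_vert₃, add_zero]
end

section
/- The exterior covariant derivative of ℛ with respect to ∇ = ∇* ⊕ ∇* is given, for all vector fields X, Y, Z on TM, by d^∇ℛ(X,Y)Z = (∇_X R)(Y,Z)ξ − (∇_Y R)(X,Z)ξ + R(Y,Z)X^v − R(X,Z)Y^v = (∇*_Xℛ)(Y,Z) − (∇*_Yℛ)(X,Z). -/
open SasakiModel in
/-- The exterior covariant derivative of `ℛ` with respect to
`∇ = ∇* ⊕ ∇*` is given, for all vector fields `X, Y, Z` on `TM`, by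
`d^∇ℛ(X,Y)Z = (∇_X R)(Y,Z)ξ − (∇_Y R)(X,Z)ξ + R(Y,Z)X^v − R(X,Z)Y^v
            = (∇*_Xℛ)(Y,Z) − (∇*_Yℛ)(X,Z)`. -/
theorem exterior_covariant_derivative_of_calR (M : SasakiModel) :
    ∀ X Y Z : M.VF,
      M.dC M.calR X Y Z =
        M.DRop X Y Z M.xi - M.DRop Y X Z M.xi + M.Rop Y Z (M.v X) - M.Rop X Z (M.v Y) ∧
      M.dC M.calR X Y Z = M.nabR X Y Z - M.nabR Y X Z := by
  intro X Y Z
  -- `Rop` vanishes when its first argument is `0`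
  have hR0 : ∀ B C : M.VF, M.Rop 0 B C = 0 := by
    intro B C
    have := M.Rop_smul₁ 0 0 B C
    simpa using this
  -- `Rop A B xi` is vertical, hence has no horizontal part
  have hRv : ∀ A B : M.VF, M.h (M.Rop A B M.xi) = 0 := by
    intro A B
    have hv := M.Rop_v A B M.xi
    rw [M.v_xi] at hv
    rw [← hv, M.h_of_v]
  -- key vanishing : `Rop (Rop A B xi) C xi = 0`
  have key : ∀ A B C : M.VF, M.Rop (M.Rop A B M.xi) C M.xi = 0 := by
    intro A B C
    rw [M.Rop_horiz, hRv, hR0]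
  -- subtraction rule for the first argument of `Rop`
  have Rsub : ∀ A B C D : M.VF, M.Rop (A - B) C D = M.Rop A C D - M.Rop B C D := by
    intro A B C D
    have hneg : M.Rop (-B) C D = -M.Rop B C D := by
      have := M.Rop_smul₁ (-1) B C D
      simpa [neg_one_smul] using this
    rw [sub_eq_add_neg, M.Rop_add₁, hneg, sub_eq_add_neg]
  have hmain : M.Rop (M.nab X Y) Z M.xi - M.Rop (M.nab Y X) Z M.xi
      - M.Rop (M.lie X Y) Z M.xi = 0 := by
    rw [← Rsub, ← Rsub, M.torsion_nab, key]
  have e2 : M.dC M.calR X Y Z = M.nabR X Y Z - M.nabR Y X Z := by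
    simp only [SasakiModel.dC, SasakiModel.nabR, SasakiModel.calR]
    rw [← sub_eq_zero, ← hmain]
    abel
  refine ⟨?_, e2⟩
  rw [e2]
  simp only [SasakiModel.nabR, SasakiModel.DRop, SasakiModel.calR, M.nab_xi]
  abel
end

section
/- Suppose f₁ > 0 is constant, f₂ = e^{2φ₂}, and the Levi-Civita connection ∇ of M is flat, so that ∇^G_X Y = ∇_X Y + X(φ₂)Y^v + Y(φ₂)X^v − δ⟨X^v,Y^v⟩ grad φ₂. Then the Riemannian curvature tensor of TM with metric G = g^{f₁,f₂} is R^G(X,Y)Z = (X(φ₂)Z(φ₂) + δε²⟨X^v,Z^v⟩ + ⟨∇_X grad φ₂, Z⟩)Y^v − (Y(φ₂)Z(φ₂) + δε²⟨Y^v,Z^v⟩ + ⟨∇_Y grad φ₂, Z⟩)X^v − δ(X(φ₂)⟨Y^v,Z^v⟩ − Y(φ₂)⟨X^v,Z^v⟩) grad φ₂ − δ⟨Y^v,Z^v⟩∇_X grad φ₂ + δ⟨X^v,Z^v⟩∇_Y grad φ₂, where ε = ‖grad φ₂‖. -/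
namespace SasakiModel

variable (M : SasakiModel)

/-- The function `δ = f₂/f₁` on `M`, for a constant `f₁` and a function `f₂`. -/
noncomputable def deltaF (f₁ : ℝ) (f₂ : M.F) : M.F := M.cst f₁⁻¹ * f₂

/-- The Levi-Civita connection `∇^G` of the weighted Sasaki metric `G = g^{f₁,f₂}`
on `TM` when `M` is flat, `f₁` is a positive constant and `f₂ = e^{2φ₂}`:
`∇^G_X Y = ∇_X Y + X(φ₂)Y^v + Y(φ₂)X^v − δ⟨X^v,Y^v⟩ grad φ₂`, where `g₂` is the
horizontal lift `grad φ₂` of the gradient of `φ₂`. -/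
noncomputable def nabGflat (f₁ : ℝ) (f₂ φ₂ : M.F) (g₂ : M.VF) (X Y : M.VF) : M.VF :=
  M.nab X Y + M.der X φ₂ • M.v Y + M.der Y φ₂ • M.v X
    - (M.deltaF f₁ f₂ * M.inn (M.v X) (M.v Y)) • g₂

end SasakiModel

set_option maxRecDepth 10000 in
set_option maxHeartbeats 2000000 in
open SasakiModel in
/-- Suppose `f₁ > 0` is constant, `f₂ = e^{2φ₂}`, and the Levi-Civita
connection `∇` of `M` is flat, so that
`∇^G_X Y = ∇_X Y + X(φ₂)Y^v + Y(φ₂)X^v − δ⟨X^v,Y^v⟩ grad φ₂`.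
Then the Riemannian curvature tensor of `TM` with metric `G = g^{f₁,f₂}` is
`R^G(X,Y)Z = (X(φ₂)Z(φ₂) + δε²⟨X^v,Z^v⟩ + ⟨∇_X grad φ₂, Z⟩)Y^v
  − (Y(φ₂)Z(φ₂) + δε²⟨Y^v,Z^v⟩ + ⟨∇_Y grad φ₂, Z⟩)X^v
  − δ(X(φ₂)⟨Y^v,Z^v⟩ − Y(φ₂)⟨X^v,Z^v⟩) grad φ₂
  − δ⟨Y^v,Z^v⟩∇_X grad φ₂ + δ⟨X^v,Z^v⟩∇_Y grad φ₂`,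
where `ε = ‖grad φ₂‖`, i.e. `ε² = ⟨grad φ₂, grad φ₂⟩`. -/
theorem curvature_of_TM_flat_base
    (M : SasakiModel) (f₁ : ℝ) (hf₁ : 0 < f₁) (φ₂ f₂ : M.F)
    (hφbasic : ∀ X, M.der (M.v X) φ₂ = 0)
    (hf₂pos : M.nng f₂) (hf₂unit : IsUnit f₂)
    (hf₂ : ∀ X, M.der X f₂ = M.cst 2 * f₂ * M.der X φ₂)
    (g₂ : M.VF) (hg₂h : M.h g₂ = g₂) (hg₂ : ∀ X, M.inn g₂ X = M.der X φ₂)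
    (hflat : ∀ X Y Z : M.VF, M.Rop X Y Z = 0) :
    ∀ X Y Z : M.VF,
      M.curvOf (M.nabGflat f₁ f₂ φ₂ g₂) X Y Z =
        (M.der X φ₂ * M.der Z φ₂
            + M.deltaF f₁ f₂ * M.inn g₂ g₂ * M.inn (M.v X) (M.v Z)
            + M.inn (M.nab X g₂) Z) • M.v Y
        - (M.der Y φ₂ * M.der Z φ₂
            + M.deltaF f₁ f₂ * M.inn g₂ g₂ * M.inn (M.v Y) (M.v Z)
            + M.inn (M.nab Y g₂) Z) • M.v X
        - (M.deltaF f₁ f₂ *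
            (M.der X φ₂ * M.inn (M.v Y) (M.v Z)
              - M.der Y φ₂ * M.inn (M.v X) (M.v Z))) • g₂
        - (M.deltaF f₁ f₂ * M.inn (M.v Y) (M.v Z)) • M.nab X g₂
        + (M.deltaF f₁ f₂ * M.inn (M.v X) (M.v Z)) • M.nab Y g₂ := by

  intro X Y Z
  -- basic derived linearity facts
  have vneg : ∀ A : M.VF, M.v (-A) = -M.v A := by
    intro A; rw [← neg_one_smul M.F A, M.v_smul, neg_one_smul]
  have vsub : ∀ A B : M.VF, M.v (A - B) = M.v A - M.v B := by
    intro A B; rw [sub_eq_add_neg, M.v_add, vneg, ← sub_eq_add_neg]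
  have nabneg : ∀ A B : M.VF, M.nab A (-B) = -M.nab A B := by
    intro A B; rw [← neg_one_smul M.F B, ← neg_one_smul M.F (M.nab A B),
      M.nab_leibniz]
    have : M.der A (-1 : M.F) = 0 := by
      have : (-1 : M.F) = algebraMap ℝ M.F (-1) := by simp
      rw [this]; exact M.der_const A (-1)
    rw [this, zero_smul, zero_add]
  have nabsub : ∀ A B C : M.VF, M.nab A (B - C) = M.nab A B - M.nab A C := by
    intro A B C; rw [sub_eq_add_neg, M.nab_add_right, nabneg, ← sub_eq_add_neg]
  have innsr : ∀ (f : M.F) (A B : M.VF), M.inn A (f • B) = f * M.inn A B := by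
    intro f A B; rw [M.inn_symm, M.inn_smul_left, M.inn_symm]
  have innar : ∀ A B C : M.VF, M.inn A (B + C) = M.inn A B + M.inn A C := by
    intro A B C; rw [M.inn_symm, M.inn_add_left, M.inn_symm B, M.inn_symm C]
  have innnl : ∀ A B : M.VF, M.inn (-A) B = -M.inn A B := by
    intro A B; rw [← neg_one_smul M.F A, M.inn_smul_left, neg_one_mul]
  have innnr : ∀ A B : M.VF, M.inn A (-B) = -M.inn A B := by
    intro A B; rw [M.inn_symm, innnl, M.inn_symm]
  have innsl2 : ∀ A B C : M.VF, M.inn (A - B) C = M.inn A C - M.inn B C := by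
    intro A B C; rw [sub_eq_add_neg, M.inn_add_left, innnl, ← sub_eq_add_neg]
  have innsr2 : ∀ A B C : M.VF, M.inn A (B - C) = M.inn A B - M.inn A C := by
    intro A B C; rw [sub_eq_add_neg, innar, innnr, ← sub_eq_add_neg]
  have dersm : ∀ (A : M.VF) (f : M.F), M.der (-A) f = -M.der A f := by
    intro A f; rw [← neg_one_smul M.F A, M.der_smul, neg_one_mul]
  have dersub : ∀ (A B : M.VF) (f : M.F),
      M.der (A - B) f = M.der A f - M.der B f := by
    intro A B f; rw [sub_eq_add_neg, M.der_add, dersm, ← sub_eq_add_neg]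
  -- v commutes with nab
  have vnab : ∀ A B : M.VF, M.v (M.nab A B) = M.nab A (M.v B) := by
    intro A B
    conv_lhs => rw [← M.h_add_v B]
    rw [M.nab_add_right, M.v_add, M.nab_v]
    have h0 : M.v (M.nab A (M.h B)) = 0 := by rw [← M.nab_h, M.v_of_h]
    rw [h0, zero_add]
  -- g₂ facts
  have hvg₂ : M.v g₂ = 0 := by rw [← hg₂h, M.v_of_h]
  have z1 : ∀ W : M.VF, M.inn g₂ (M.v W) = 0 := by
    intro W; rw [← hg₂h]; exact M.inn_hv g₂ W
  have z2 : ∀ W : M.VF, M.inn (M.v W) g₂ = 0 := by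
    intro W; rw [M.inn_symm]; exact z1 W
  have z3 : ∀ A B : M.VF, M.inn g₂ (M.nab A (M.v B)) = 0 := by
    intro A B; rw [← vnab]; exact z1 _
  have z4 : ∀ A B : M.VF, M.inn (M.nab A (M.v B)) g₂ = 0 := by
    intro A B; rw [M.inn_symm]; exact z3 A B
  -- derivative of δ
  have hδder : ∀ W : M.VF, M.der W (M.deltaF f₁ f₂)
      = M.cst 2 * M.deltaF f₁ f₂ * M.inn g₂ W := by
    intro W
    show M.der W (M.cst f₁⁻¹ * f₂) = _
    rw [M.der_leibniz, hf₂, hg₂]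
    have h0 : M.der W (M.cst f₁⁻¹) = 0 := M.der_const W f₁⁻¹
    rw [h0]
    show _ = M.cst 2 * (M.cst f₁⁻¹ * f₂) * M.der W φ₂
    ring
  -- lie bracket facts (flat case)
  have hlie : M.lie X Y = M.nab X Y - M.nab Y X := by
    have h0 := M.torsion_nab X Y
    rw [hflat] at h0
    exact ((sub_eq_zero.mp h0).symm)
  have hnablie : ∀ W : M.VF, M.nab (M.lie X Y) W
      = M.nab X (M.nab Y W) - M.nab Y (M.nab X W) := by
    intro W
    have h0 := M.curv_nab X Y W
    rw [hflat] at h0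
    exact (sub_eq_zero.mp h0).symm
  have hvlie : M.v (M.lie X Y) = M.nab X (M.v Y) - M.nab Y (M.v X) := by
    rw [hlie, vsub, vnab, vnab]
  have hdlie : M.der (M.lie X Y) φ₂
      = M.inn g₂ (M.nab X Y) - M.inn g₂ (M.nab Y X) := by
    rw [hlie, dersub, ← hg₂, ← hg₂]
  -- Hessian symmetry
  have hhess : M.inn (M.nab X g₂) Y = M.inn (M.nab Y g₂) X := by
    have h1 := M.nab_metric X g₂ Y
    have h2 := M.nab_metric Y g₂ X
    have h3 := M.der_lie X Y φ₂
    rw [hdlie, ← hg₂ Y, ← hg₂ X, h1, h2] at h3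
    linear_combination -h3
  have hc2 : M.cst 2 = (2 : M.F) := by
    show algebraMap ℝ M.F 2 = 2
    exact map_ofNat (algebraMap ℝ M.F) 2
  simp only [SasakiModel.curvOf, SasakiModel.nabGflat]
  simp only [hnablie, hvlie, hdlie, M.nab_add_right, nabsub, M.nab_leibniz,
    M.v_add, vsub, M.v_smul, M.v_v, hvg₂, vnab, M.nab_v,
    M.der_add, M.der_smul, dersub, dersm, ← hg₂, M.nab_metric, M.der_leibniz,
    hδder, hφbasic,
    M.inn_add_left, innar, M.inn_smul_left, innsr, innnl, innnr, innsl2, innsr2,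
    z1, z2, z3, z4,
    smul_zero, zero_smul, mul_zero, zero_mul, add_zero, zero_add, sub_zero,
    zero_sub, neg_zero, hc2]
  rw [hhess, M.inn_symm (M.v Y) (M.v X)]
  module
end
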